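/- Let p_n denote the n-th prime, Q_r = ∑_{k=1}^r 1/p_k, and let M be the Meissel–Mertens constant. Let f : [1/2, ∞) → ℝ be positive, continuous and monotonically decreasing with ∫_{1/2}^∞ f(t) dt divergent. Then ∑_{r : p_r ≤ x} (1/p_r) · f(Q_r) is asymptotically equal to ∫_{1/2}^{ln ln x + M} f(t) dt as x → ∞, i.e. the ratio of the two quantities tends to 1. -/

import Mathlib

/-!
Write `Q r` for the sum of the reciprocals of the first `r` primes. In `∑_{p_r ≤ x} f (Q r) / p_r`
the weight `1 / p_r` is the step of the partition `1/2 = Q 1 ≤ Q 2 ≤ ⋯ ≤ Q (π x)` ending at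
`Q r`, and it is at least the next step `1 / p_{r+1}`. As `f` is nonnegative and nonincreasing,
comparing with the left and right Riemann sums of `f` for this partition shows that the sum differs
from `∫_{1/2}^{Q (π x)} f` by at most `f (1/2) / 2`. By the definition of `M`,
`Q (π x) = ln ln x + M + o(1)`, and as `f ≤ f (1/2)`, moving the upper limit by `o(1)` changes
the integral by `o(1)`. So numerator and denominator differ by `O(1)`, which is negligible
against the divergent integral.
-/

open Filter Finset

open Asymptotics MeasureTheory Topology
open Nat (nth primeCounting)

section RiemannSums

variable {f : ℝ → ℝ}

theorem AntitoneOn.intervalIntegrable_of_Ici {c u v : ℝ} (hf : AntitoneOn f (Set.Ici c))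
    (hu : c ≤ u) (hv : c ≤ v) : IntervalIntegrable f volume u v :=
  (hf.mono fun _ ht => (le_min hu hv).trans ht.1).intervalIntegrable

theorem AntitoneOn.mul_le_integral {u v : ℝ} (hf : AntitoneOn f (Set.Icc u v)) (huv : u ≤ v) :
    (v - u) * f v ≤ ∫ t in u..v, f t := by
  have hint : IntervalIntegrable f volume u v := by
    rw [← Set.uIcc_of_le huv] at hf
    exact hf.intervalIntegrable
  simpa using intervalIntegral.integral_mono_on huv intervalIntegrable_const hint
    fun t ht => hf ht ⟨huv, le_rfl⟩ ht.2

theorem AntitoneOn.integral_le_mul {u v : ℝ} (hf : AntitoneOn f (Set.Icc u v)) (huv : u ≤ v) :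
    ∫ t in u..v, f t ≤ (v - u) * f u := by
  have hint : IntervalIntegrable f volume u v := by
    rw [← Set.uIcc_of_le huv] at hf
    exact hf.intervalIntegrable
  simpa using intervalIntegral.integral_mono_on huv hint intervalIntegrable_const
    fun t ht => hf ⟨le_rfl, huv⟩ ht ht.1

variable {a : ℕ → ℝ}

theorem AntitoneOn.sum_partition_le_integral (hf : AntitoneOn f (Set.Ici (a 0)))
    (ha : Monotone a) (n : ℕ) :
    ∑ i ∈ range n, (a (i + 1) - a i) * f (a (i + 1)) ≤ ∫ t in a 0..a n, f t := by
  rw [← intervalIntegral.sum_integral_adjacent_intervals fun i _ =>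
    hf.intervalIntegrable_of_Ici (ha (Nat.zero_le i)) (ha (Nat.zero_le _))]
  exact sum_le_sum fun i _ =>
    (hf.mono fun t ht => (ha (Nat.zero_le i)).trans ht.1).mul_le_integral (ha i.le_succ)

theorem AntitoneOn.integral_le_sum_partition (hf : AntitoneOn f (Set.Ici (a 0)))
    (ha : Monotone a) (n : ℕ) :
    ∫ t in a 0..a n, f t ≤ ∑ i ∈ range n, (a (i + 1) - a i) * f (a i) := by
  rw [← intervalIntegral.sum_integral_adjacent_intervals fun i _ =>
    hf.intervalIntegrable_of_Ici (ha (Nat.zero_le i)) (ha (Nat.zero_le _))]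
  exact sum_le_sum fun i _ =>
    (hf.mono fun t ht => (ha (Nat.zero_le i)).trans ht.1).integral_le_mul (ha i.le_succ)

theorem AntitoneOn.abs_sum_mul_sub_integral_le {c : ℕ → ℝ} (hc : Antitone c)
    (hc0 : ∀ i, 0 ≤ c i) (ha : ∀ i, a (i + 1) = a i + c (i + 1)) (hf : AntitoneOn f (Set.Ici (a 0)))
    (hf0 : ∀ t, a 0 ≤ t → 0 ≤ f t) (n : ℕ) :
    |∑ i ∈ range (n + 1), c i * f (a i) - ∫ t in a 0..a n, f t| ≤ c 0 * f (a 0) := by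
  have hmono : Monotone a := monotone_nat_of_le_succ fun i => by linarith [ha i, hc0 (i + 1)]
  have hstep : ∀ i, a (i + 1) - a i = c (i + 1) := fun i => by rw [ha]; ring
  have hf0' : ∀ i, 0 ≤ f (a i) := fun i => hf0 _ (hmono (Nat.zero_le i))
  have hlower : ∫ t in a 0..a n, f t ≤ ∑ i ∈ range (n + 1), c i * f (a i) :=
    calc ∫ t in a 0..a n, f t ≤ ∑ i ∈ range n, c (i + 1) * f (a i) := by
          simpa only [hstep] using hf.integral_le_sum_partition hmono n
      _ ≤ ∑ i ∈ range n, c i * f (a i) :=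
          sum_le_sum fun i _ => mul_le_mul_of_nonneg_right (hc i.le_succ) (hf0' i)
      _ ≤ ∑ i ∈ range (n + 1), c i * f (a i) := by
          rw [sum_range_succ]; linarith [mul_nonneg (hc0 n) (hf0' n)]
  have hupper : ∑ i ∈ range (n + 1), c i * f (a i) ≤ c 0 * f (a 0) + ∫ t in a 0..a n, f t := by
    have hright := hf.sum_partition_le_integral hmono n
    simp only [hstep] at hright
    rw [sum_range_succ']
    linarith
  rw [abs_le]
  constructor <;> linarith

theorem AntitoneOn.abs_integral_sub_integral_le {c u v : ℝ} (hf : AntitoneOn f (Set.Ici c))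
    (hf0 : ∀ t, c ≤ t → 0 ≤ f t) (hu : c ≤ u) (hv : c ≤ v) :
    |(∫ t in c..u, f t) - ∫ t in c..v, f t| ≤ f c * |u - v| := by
  rw [intervalIntegral.integral_interval_sub_left (hf.intervalIntegrable_of_Ici le_rfl hu)
    (hf.intervalIntegrable_of_Ici le_rfl hv), ← Real.norm_eq_abs]
  refine intervalIntegral.norm_integral_le_of_norm_le_const fun t ht => ?_
  have hct : c ≤ t := (le_min hv hu).trans (Set.uIoc_subset_uIcc ht).1
  rw [Real.norm_of_nonneg (hf0 t hct)]
  exact hf Set.self_mem_Ici hct hct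

end RiemannSums

theorem tendsto_div_nhds_one_of_sub_isBigO_one {α : Type*} {l : Filter α} {u v : α → ℝ}
    (huv : (u - v) =O[l] (fun _ => (1 : ℝ))) (hv : Tendsto v l atTop) :
    Tendsto (fun x => u x / v x) l (𝓝 1) :=
  (isEquivalent_iff_tendsto_one (hv.eventually_ne_atTop 0)).mp <|
    huv.trans_isLittleO <| (isLittleO_one_left_iff ℝ).mpr (tendsto_norm_atTop_atTop.comp hv)

theorem sum_Icc_one_eq_sum_range {M : Type*} [AddCommMonoid M] (g : ℕ → M) (n : ℕ) :
    ∑ r ∈ Icc 1 n, g r = ∑ i ∈ range n, g (i + 1) := by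
  induction n with
  | zero => simp
  | succ n ih => rw [sum_Icc_succ_top (by omega), ih, sum_range_succ]

namespace Nat

theorem nth_prime_le_iff_lt_primeCounting {k m : ℕ} :
    nth Nat.Prime k ≤ m ↔ k < primeCounting m := by
  rw [primeCounting, primeCounting', lt_nth_iff_count_lt infinite_setOfPred_prime, Nat.lt_succ_iff]

theorem sum_filter_prime_Iic_eq_sum_range {M : Type*} [AddCommMonoid M] (g : ℕ → M) (m : ℕ) :
    ∑ q ∈ (Iic m).filter Nat.Prime, g q = ∑ k ∈ range (primeCounting m), g (nth Nat.Prime k) := by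
  rw [← sum_image fun _ _ _ _ h => nth_injective infinite_setOfPred_prime h]
  congr 1
  ext q
  simp only [mem_filter, mem_Iic, mem_image, mem_range]
  constructor
  · rintro ⟨hqm, hq⟩
    refine ⟨count Nat.Prime q, nth_prime_le_iff_lt_primeCounting.mp ?_, nth_count hq⟩
    rwa [nth_count hq]
  · rintro ⟨k, hk, rfl⟩
    exact ⟨nth_prime_le_iff_lt_primeCounting.mpr hk, prime_nth_prime k⟩

theorem filter_Icc_nth_prime_le {x : ℝ} (hx : 0 ≤ x) :
    (Icc 1 ⌊x⌋₊).filter (fun r => (nth Nat.Prime (r - 1) : ℝ) ≤ x) =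
      Icc 1 (primeCounting ⌊x⌋₊) := by
  ext r
  simp only [mem_filter, mem_Icc, ← Nat.le_floor_iff hx, nth_prime_le_iff_lt_primeCounting]
  have := add_two_le_nth_prime (r - 1)
  constructor
  · rintro ⟨⟨h1, -⟩, h⟩
    omega
  · rintro ⟨h1, h⟩
    have := nth_prime_le_iff_lt_primeCounting.mpr (show r - 1 < primeCounting ⌊x⌋₊ by omega)
    omega

end Nat

noncomputable def primeReciprocalSum (r : ℕ) : ℝ :=
  ∑ i ∈ range r, 1 / (nth Nat.Prime i : ℝ)

theorem primeReciprocalSum_succ (r : ℕ) :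
    primeReciprocalSum (r + 1) = primeReciprocalSum r + 1 / (nth Nat.Prime r : ℝ) :=
  sum_range_succ _ r

theorem primeReciprocalSum_one : primeReciprocalSum 1 = 1 / 2 := by
  simp [primeReciprocalSum, Nat.nth_prime_zero_eq_two]

theorem sum_filter_prime_Iic_one_div_eq_primeReciprocalSum (m : ℕ) :
    ∑ q ∈ (Iic m).filter Nat.Prime, (1 : ℝ) / q = primeReciprocalSum (primeCounting m) :=
  Nat.sum_filter_prime_Iic_eq_sum_range _ m

theorem primeReciprocalSum_mono : Monotone primeReciprocalSum := fun _ _ h =>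
  sum_le_sum_of_subset_of_nonneg (range_mono h) fun _ _ _ => by positivity

theorem primeCounting_floor_pos {x : ℝ} (hx : 2 ≤ x) : 0 < primeCounting ⌊x⌋₊ := by
  have : 2 ≤ ⌊x⌋₊ := Nat.le_floor (by exact_mod_cast hx)
  rw [Nat.pos_iff_ne_zero, Ne, Nat.primeCounting_eq_zero_iff]
  omega

theorem one_half_le_primeReciprocalSum_primeCounting_floor {x : ℝ} (hx : 2 ≤ x) :
    1 / 2 ≤ primeReciprocalSum (primeCounting ⌊x⌋₊) :=
  primeReciprocalSum_one ▸ primeReciprocalSum_mono (primeCounting_floor_pos hx)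

theorem abs_sum_nth_prime_le_sub_integral_le {f : ℝ → ℝ} (hf : AntitoneOn f (Set.Ici (1 / 2)))
    (hf0 : ∀ t, 1 / 2 ≤ t → 0 ≤ f t) {x : ℝ} (hx : 2 ≤ x) :
    |∑ r ∈ (Icc 1 ⌊x⌋₊).filter (fun r => (nth Nat.Prime (r - 1) : ℝ) ≤ x),
        1 / (nth Nat.Prime (r - 1) : ℝ) * f (primeReciprocalSum r) -
      ∫ t in 1 / 2..primeReciprocalSum (primeCounting ⌊x⌋₊), f t| ≤ 1 / 2 * f (1 / 2) := by
  obtain ⟨n, hn⟩ := Nat.exists_eq_add_one.mpr (primeCounting_floor_pos hx)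
  have hc : Antitone fun i => 1 / (nth Nat.Prime i : ℝ) := fun i j hij =>
    one_div_le_one_div_of_le (by exact_mod_cast (Nat.prime_nth_prime i).pos)
      (by exact_mod_cast Nat.nth_monotone Nat.infinite_setOfPred_prime hij)
  have hriemann := AntitoneOn.abs_sum_mul_sub_integral_le (f := f)
    (a := fun i => primeReciprocalSum (i + 1)) hc (fun i => by positivity)
    (fun i => primeReciprocalSum_succ (i + 1))
    (by simpa only [zero_add, primeReciprocalSum_one] using hf)
    (by simpa only [zero_add, primeReciprocalSum_one] using hf0) n
  rw [Nat.filter_Icc_nth_prime_le (by linarith), sum_Icc_one_eq_sum_range, hn]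
  simpa [primeReciprocalSum_one, Nat.nth_prime_zero_eq_two] using hriemann

theorem sum_recip_prime_f_asymp_integral_general
    (p : ℕ → ℕ) (hp : ∀ n, p n = Nat.nth Nat.Prime (n - 1))
    (Q : ℕ → ℝ) (hQ : ∀ r, Q r = ∑ k ∈ Finset.Icc 1 r, (1 : ℝ) / (p k : ℝ))
    (M : ℝ)
    (hM : Tendsto (fun x : ℝ =>
        (∑ q ∈ (Finset.Iic ⌊x⌋₊).filter Nat.Prime, (1 : ℝ) / (q : ℝ)) -
          Real.log (Real.log x)) atTop (nhds M))
    (f : ℝ → ℝ)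
    (hfpos : ∀ t : ℝ, (1:ℝ)/2 ≤ t → 0 < f t)
    (hfdec : AntitoneOn f (Set.Ici ((1:ℝ)/2)))
    (hfint : Tendsto (fun y : ℝ => ∫ t in ((1:ℝ)/2)..y, f t) atTop atTop) :
    Tendsto (fun x : ℝ =>
        (∑ r ∈ (Finset.Icc 1 ⌊x⌋₊).filter (fun r => (p r : ℝ) ≤ x),
            (1 / (p r : ℝ)) * f (Q r)) /
          (∫ t in ((1:ℝ)/2)..(Real.log (Real.log x) + M), f t))
      atTop (nhds 1) := by
  obtain rfl : p = fun n => nth Nat.Prime (n - 1) := funext hp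
  obtain rfl : Q = primeReciprocalSum := funext fun r => by
    rw [hQ, sum_Icc_one_eq_sum_range, primeReciprocalSum]
    simp
  have hf0 : ∀ t, 1 / 2 ≤ t → 0 ≤ f t := fun t ht => (hfpos t ht).le
  set L : ℝ → ℝ := fun x => Real.log (Real.log x) + M
  have hL : Tendsto L atTop atTop :=
    tendsto_atTop_add_const_right _ M (Real.tendsto_log_atTop.comp Real.tendsto_log_atTop)
  have hQL : Tendsto (fun x => primeReciprocalSum (primeCounting ⌊x⌋₊) - L x) atTop (𝓝 0) := by
    simpa only [L, sum_filter_prime_Iic_one_div_eq_primeReciprocalSum, sub_self,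
      sub_add_eq_sub_sub] using hM.sub_const M
  set I : ℝ → ℝ := fun x => ∫ t in 1 / 2..primeReciprocalSum (primeCounting ⌊x⌋₊), f t
  have hsum : (fun x => ∑ r ∈ (Icc 1 ⌊x⌋₊).filter (fun r => (nth Nat.Prime (r - 1) : ℝ) ≤ x),
      1 / (nth Nat.Prime (r - 1) : ℝ) * f (primeReciprocalSum r) - I x) =O[atTop]
      fun _ => (1 : ℝ) :=
    .of_bound (1 / 2 * f (1 / 2)) <| by
      filter_upwards [eventually_ge_atTop 2] with x hx
      simpa [I] using abs_sum_nth_prime_le_sub_integral_le hfdec hf0 hx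
  have hint : (fun x => I x - ∫ t in 1 / 2..L x, f t) =O[atTop]
      fun x => primeReciprocalSum (primeCounting ⌊x⌋₊) - L x :=
    .of_bound (f (1 / 2)) <| by
      filter_upwards [eventually_ge_atTop 2, hL.eventually_ge_atTop (1 / 2)] with x hx hLx
      simpa [I] using hfdec.abs_integral_sub_integral_le hf0
        (one_half_le_primeReciprocalSum_primeCounting_floor hx) hLx
  exact tendsto_div_nhds_one_of_sub_isBigO_one
    ((hsum.add (hint.trans (hQL.isBigO_one ℝ))).congr_left fun x => sub_add_sub_cancel _ _ _)
    (hfint.comp hL)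

/-- With `p n` the `n`-th prime, `Q r = ∑_{k=1}^r 1/p k`, `M` the
Meissel–Mertens constant, and `f` positive continuous monotonically decreasing on
`[1/2, ∞)` with divergent integral,
`∑_{r : p r ≤ x} (1/p r) * f (Q r) ~ ∫_{1/2}^{ln ln x + M} f(t) dt` as `x → ∞`. -/
theorem sum_recip_prime_f_asymp_integral
    (p : ℕ → ℕ) (hp : ∀ n, p n = Nat.nth Nat.Prime (n - 1))
    (Q : ℕ → ℝ) (hQ : ∀ r, Q r = ∑ k ∈ Finset.Icc 1 r, (1 : ℝ) / (p k : ℝ))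
    (M : ℝ)
    (hM : Tendsto (fun x : ℝ =>
        (∑ q ∈ (Finset.Iic ⌊x⌋₊).filter Nat.Prime, (1 : ℝ) / (q : ℝ)) -
          Real.log (Real.log x)) atTop (nhds M))
    (f : ℝ → ℝ)
    (hfpos : ∀ t : ℝ, (1:ℝ)/2 ≤ t → 0 < f t)
    (hfcont : ContinuousOn f (Set.Ici ((1:ℝ)/2)))
    (hfdec : AntitoneOn f (Set.Ici ((1:ℝ)/2)))
    (hfint : Tendsto (fun y : ℝ => ∫ t in ((1:ℝ)/2)..y, f t) atTop atTop) :
    Tendsto (fun x : ℝ =>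
        (∑ r ∈ (Finset.Icc 1 ⌊x⌋₊).filter (fun r => (p r : ℝ) ≤ x),
            (1 / (p r : ℝ)) * f (Q r)) /
          (∫ t in ((1:ℝ)/2)..(Real.log (Real.log x) + M), f t))
      atTop (nhds 1) :=
  sum_recip_prime_f_asymp_integral_general p hp Q hQ M hM f hfpos hfdec hfint
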